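/- Let h > 0 and let A be the real 2×2 matrix [[1, −h], [h, 1]]. Then for every x ∈ ℝ², ‖A x‖² = (1 + h²)‖x‖², and consequently any sequence (x_k) in ℝ² with x_{k+1} = A x_k for all k ≥ k₀ and x_{k₀} ≠ 0 has strictly increasing norms for k ≥ k₀ and does not converge to 0. (Hence a Wasserstein GAN on the Dirac-GAN trained with simultaneous gradient descent with fixed learning rate h, whose update is linear with matrix A once |ψ_k| < 1, does not converge to the Nash equilibrium (0, 0) from any nonzero state.) -/
import Mathlib


open Matrix Filter

private lemma norm_step_aux (a b c : ℝ) (ha : 0 < a) (hb0 : 0 ≤ b) (hc : 1 < c)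
    (hb : b ^ 2 = c * a ^ 2) : a < b :=
  lt_of_pow_lt_pow_left₀ 2 hb0 (by nlinarith [mul_pos ha ha])

/-- For `A = [[1, −h], [h, 1]]` with `h > 0`, every `x ∈ ℝ²` satisfies
`‖Ax‖² = (1 + h²)‖x‖²`; hence any sequence with `x_{k+1} = A x_k` for `k ≥ k₀` and
`x_{k₀} ≠ 0` has strictly increasing norms on `k ≥ k₀` and does not converge to `0`.
(This is the WGAN Dirac-GAN update once `|ψ_k| < 1`.) -/
theorem wgan_dirac_gan_not_convergent
    (h : ℝ) (hh : 0 < h)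
    (A : Matrix (Fin 2) (Fin 2) ℝ) (hA : A = !![1, -h; h, 1]) :
    (∀ x : EuclideanSpace ℝ (Fin 2),
      ‖Matrix.toEuclideanCLM (𝕜 := ℝ) A x‖ ^ 2 = (1 + h ^ 2) * ‖x‖ ^ 2) ∧
    ∀ (x : ℕ → EuclideanSpace ℝ (Fin 2)) (k₀ : ℕ),
      (∀ k, k₀ ≤ k → x (k + 1) = Matrix.toEuclideanCLM (𝕜 := ℝ) A (x k)) →
      x k₀ ≠ 0 →
      StrictMonoOn (fun k => ‖x k‖) (Set.Ici k₀) ∧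
      ¬ Tendsto x atTop (nhds 0) := by
  have hnorm : ∀ y : EuclideanSpace ℝ (Fin 2), ‖y‖ ^ 2 = y 0 ^ 2 + y 1 ^ 2 := by
    intro y
    rw [EuclideanSpace.norm_eq, Real.sq_sqrt (by positivity)]
    simp [Fin.sum_univ_two, Real.norm_eq_abs, sq_abs]
  have key : ∀ x : EuclideanSpace ℝ (Fin 2),
      ‖Matrix.toEuclideanCLM (𝕜 := ℝ) A x‖ ^ 2 = (1 + h ^ 2) * ‖x‖ ^ 2 := by
    intro x
    have hmv := Matrix.ofLp_toEuclideanCLM (𝕜 := ℝ) A x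
    have h0 : (Matrix.toEuclideanCLM (𝕜 := ℝ) A x) 0 = x 0 - h * x 1 := by
      have := congrFun hmv 0
      simpa [hA, Matrix.mulVec, dotProduct, Fin.sum_univ_two, sub_eq_add_neg] using this
    have h1 : (Matrix.toEuclideanCLM (𝕜 := ℝ) A x) 1 = h * x 0 + x 1 := by
      have := congrFun hmv 1
      simpa [hA, Matrix.mulVec, dotProduct, Fin.sum_univ_two] using this
    rw [hnorm, hnorm, h0, h1]
    ring
  refine ⟨key, fun x k₀ hrec hne => ?_⟩
  have hfac : (1:ℝ) < 1 + h ^ 2 := by nlinarith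
  have hstep : ∀ k, k₀ ≤ k → ‖x k‖ < ‖x (k + 1)‖ ∧ 0 < ‖x (k + 1)‖ := by
    intro k hk
    induction k with
    | zero =>
      have hk0 : k₀ = 0 := Nat.le_zero.mp hk
      have hpos : 0 < ‖x 0‖ := by
        rw [← hk0]; exact norm_pos_iff.mpr hne
      have : ‖x (0 + 1)‖ ^ 2 = (1 + h ^ 2) * ‖x 0‖ ^ 2 := by
        rw [hrec 0 hk]; exact key _
      have hlt := norm_step_aux _ _ _ hpos (norm_nonneg _) hfac this
      exact ⟨hlt, lt_trans hpos hlt⟩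
    | succ n ih =>
      have hpos : 0 < ‖x (n + 1)‖ := by
        rcases le_or_gt k₀ n with hn | hn
        · exact (ih hn).2
        · have : k₀ = n + 1 := by omega
          rw [← this]; exact norm_pos_iff.mpr hne
      have : ‖x (n + 1 + 1)‖ ^ 2 = (1 + h ^ 2) * ‖x (n + 1)‖ ^ 2 := by
        rw [hrec (n + 1) hk]; exact key _
      have hlt := norm_step_aux _ _ _ hpos (norm_nonneg _) hfac this
      exact ⟨hlt, lt_trans hpos hlt⟩
  have hmono : StrictMonoOn (fun k => ‖x k‖) (Set.Ici k₀) := by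
    intro m hm n hn hmn
    simp only [Set.mem_Ici] at hm
    clear hn
    induction n with
    | zero => omega
    | succ p ih =>
      rcases Nat.lt_or_ge m p with hp | hp
      · exact lt_trans (ih hp) (hstep p (by omega)).1
      · have : m = p := by omega
        subst this
        exact (hstep m hm).1
  refine ⟨hmono, fun hT => ?_⟩
  have hpos : 0 < ‖x (k₀ + 1)‖ := (hstep k₀ le_rfl).2
  have hTn : Tendsto (fun k => ‖x k‖) atTop (nhds 0) := by
    simpa using hT.norm
  have hev : ∀ᶠ k in atTop, ‖x k‖ < ‖x (k₀ + 1)‖ :=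
    hTn.eventually (eventually_lt_nhds hpos)
  rcases (hev.and (eventually_ge_atTop (k₀ + 2))).exists with ⟨k, hk1, hk2⟩
  have : ‖x (k₀ + 1)‖ < ‖x k‖ :=
    hmono (by simp) (by simp; omega) (by omega)
  linarith
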